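/- arXiv:2211.14549 — 2 statements merged into one kernel-verified Lean document; each statement's English description precedes it below -/
import Mathlib

section
/- For all nonnegative integers m and k, B_m^{(-k)} = B_k^{(-m)} (duality of poly-Bernoulli numbers with negative upper index). -/
/-- Stirling numbers of the second kind. -/
def S2 : ℕ → ℕ → ℕ
  | 0, 0 => 1
  | 0, _ + 1 => 0
  | _ + 1, 0 => 0
  | n + 1, m + 1 => S2 n m + (m + 1) * S2 n (m + 1)
/-- Poly-Bernoulli number with negative upper index: `B_n^{(-k)}`. -/
def Bneg (n k : ℕ) : ℤ :=
  (-1 : ℤ) ^ n * ∑ m ∈ Finset.range (n + 1),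
    (-1 : ℤ) ^ m * (Nat.factorial m : ℤ) * (S2 n m : ℤ) * ((m : ℤ) + 1) ^ k

/-!
Expanding `(m + 1)ᵏ = ∑ⱼ S(k+1, j+1) m^(j)` in falling factorials `m^(j) = m(m-1)⋯(m-j+1)`
reduces `B_n^{(-k)}` to the values of the functional `Lₙ f = ∑ₘ (-1)ᵐ m! S(n, m) f(m)` on falling
factorials. The Stirling recurrence gives `Lₙ₊₁ f = -Lₙ (Δ (x f))`, so `(-1)ⁿ Lₙ (x^(j))` obeys the
same recurrence in `n` as `(j!)² S(n+1, j+1)`. Hence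
`B_n^{(-k)} = ∑ⱼ (j!)² S(n+1, j+1) S(k+1, j+1)`, which is symmetric in `n` and `k`.
-/

open Finset Nat

theorem S2_eq_stirlingSecond : S2 = stirlingSecond := by
  funext n k
  induction n generalizing k with
  | zero => cases k <;> rfl
  | succ n ih =>
    cases k with
    | zero => rfl
    | succ k => rw [S2, stirlingSecond_succ_succ, ih, ih, add_comm]

theorem succ_mul_descFactorial (m j : ℕ) :
    (m + 1) * m.descFactorial j = m.descFactorial (j + 1) + (j + 1) * m.descFactorial j := by
  rcases lt_or_ge m j with hmj | hjm
  · simp [descFactorial_eq_zero_iff_lt.2 hmj]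
  · rw [descFactorial_succ, ← add_mul]
    congr 1
    omega

theorem add_one_pow_eq_sum_stirlingSecond_mul_descFactorial (m k : ℕ) :
    (m + 1) ^ k = ∑ j ∈ range (k + 1), stirlingSecond (k + 1) (j + 1) * m.descFactorial j := by
  induction k with
  | zero => simp [stirlingSecond_self]
  | succ k ih =>
    have top : stirlingSecond (k + 1) (k + 2) = 0 := stirlingSecond_eq_zero_of_lt (by omega)
    calc (m + 1) ^ (k + 1)
        = ∑ j ∈ range (k + 1), stirlingSecond (k + 1) (j + 1) *
            (m.descFactorial (j + 1) + (j + 1) * m.descFactorial j) := by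
          rw [pow_succ, ih, sum_mul]
          refine sum_congr rfl fun j _ => ?_
          rw [← succ_mul_descFactorial]
          ring
      _ = ∑ j ∈ range (k + 2), stirlingSecond (k + 1) j * m.descFactorial j +
            ∑ j ∈ range (k + 2), (j + 1) * stirlingSecond (k + 1) (j + 1) * m.descFactorial j := by
          rw [sum_range_succ' (fun j => stirlingSecond (k + 1) j * m.descFactorial j),
            sum_range_succ (fun j => (j + 1) * stirlingSecond (k + 1) (j + 1) * m.descFactorial j)]
          simp only [top, stirlingSecond_succ_zero, zero_mul, mul_zero, add_zero,
            ← sum_add_distrib]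
          refine sum_congr rfl fun j _ => ?_
          ring
      _ = _ := by
          rw [← sum_add_distrib]
          refine sum_congr rfl fun j _ => ?_
          rw [stirlingSecond_succ_succ (k + 1) j]
          ring

def stirlingFunctional (n : ℕ) : (ℕ → ℤ) →ₗ[ℤ] ℤ where
  toFun f := ∑ m ∈ range (n + 1), (-1) ^ m * (m ! : ℤ) * stirlingSecond n m * f m
  map_add' f g := by simp only [Pi.add_apply, mul_add, sum_add_distrib]
  map_smul' c f := by
    simp only [Pi.smul_apply, smul_eq_mul, RingHom.id_apply, mul_sum]
    exact sum_congr rfl fun m _ => by ring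

theorem stirlingFunctional_apply (n : ℕ) (f : ℕ → ℤ) :
    stirlingFunctional n f = ∑ m ∈ range (n + 1), (-1) ^ m * (m ! : ℤ) * stirlingSecond n m * f m :=
  rfl

theorem Bneg_eq_stirlingFunctional (n k : ℕ) :
    Bneg n k = (-1) ^ n * stirlingFunctional n (fun m => ((m : ℤ) + 1) ^ k) := by
  rw [Bneg, stirlingFunctional_apply, S2_eq_stirlingSecond]

theorem sum_range_succ_shift_of_eq_zero {M : Type*} [AddCommMonoid M] (g : ℕ → M) (n : ℕ)
    (h0 : g 0 = 0) (hn : g n = 0) : ∑ m ∈ range n, g (m + 1) = ∑ m ∈ range n, g m := by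
  have h := (sum_range_succ' g n).symm.trans (sum_range_succ g n)
  rwa [h0, hn, add_zero, add_zero] at h

theorem stirlingFunctional_succ (n : ℕ) (f : ℕ → ℤ) :
    stirlingFunctional (n + 1) f =
      -stirlingFunctional n (fun m => (m + 1) * f (m + 1) - m * f m) := by
  set g : ℕ → ℤ := fun m => (-1) ^ m * (m ! : ℤ) * m * stirlingSecond n m * f m
  have shift : ∑ m ∈ range (n + 1), g (m + 1) = ∑ m ∈ range (n + 1), g m :=
    sum_range_succ_shift_of_eq_zero g (n + 1) (by simp [g])
      (by simp [g, stirlingSecond_eq_zero_of_lt n.lt_succ_self])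
  rw [stirlingFunctional_apply, stirlingFunctional_apply, sum_range_succ',
    stirlingSecond_succ_zero, Nat.cast_zero, mul_zero, zero_mul, add_zero]
  calc ∑ m ∈ range (n + 1),
        (-1) ^ (m + 1) * ((m + 1)! : ℤ) * stirlingSecond (n + 1) (m + 1) * f (m + 1)
      = ∑ m ∈ range (n + 1),
          (g (m + 1) - (-1) ^ m * (m + 1)! * stirlingSecond n m * f (m + 1)) := by
        refine sum_congr rfl fun m _ => ?_
        simp only [g, stirlingSecond_succ_succ, factorial_succ]
        push_cast
        ring
    _ = _ := by
        rw [sum_sub_distrib, shift, ← sum_sub_distrib, ← sum_neg_distrib]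
        refine sum_congr rfl fun m _ => ?_
        simp only [g, factorial_succ]
        push_cast
        ring

theorem descFactorial_forward_difference (x j : ℕ) :
    ((x : ℤ) + 1) * ((x + 1).descFactorial (j + 1) : ℤ) - x * (x.descFactorial (j + 1) : ℤ) =
      ((j : ℤ) + 2) * x.descFactorial (j + 1) + ((j : ℤ) + 1) ^ 2 * x.descFactorial j := by
  have h₁ : ((x + 1).descFactorial (j + 1) : ℤ) = (x + 1) * x.descFactorial j := by
    exact_mod_cast succ_descFactorial_succ x j
  have h₂ : ((x : ℤ) + 1) * x.descFactorial j =
      x.descFactorial (j + 1) + (j + 1) * x.descFactorial j := by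
    exact_mod_cast succ_mul_descFactorial x j
  linear_combination (x + 1 : ℤ) * h₁ + ((x : ℤ) + j + 2) * h₂

theorem stirlingFunctional_descFactorial (n j : ℕ) :
    (-1) ^ n * stirlingFunctional n (fun m => (m.descFactorial j : ℤ)) =
      (j ! : ℤ) ^ 2 * stirlingSecond (n + 1) (j + 1) := by
  induction n generalizing j with
  | zero =>
    cases j with
    | zero => simp [stirlingFunctional_apply, stirlingSecond_self]
    | succ j =>
      simp [stirlingFunctional_apply, stirlingSecond_eq_zero_of_lt (show 1 < j + 2 by omega)]
  | succ n ih =>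
    cases j with
    | zero =>
      have hΔ : (fun m : ℕ => ((m : ℤ) + 1) * ((m + 1).descFactorial 0 : ℤ) -
          m * (m.descFactorial 0 : ℤ)) = fun m => (m.descFactorial 0 : ℤ) := by
        funext m
        simp
      have h := ih 0
      rw [stirlingSecond_one_right] at h
      rw [stirlingFunctional_succ, hΔ, stirlingSecond_one_right]
      linear_combination h
    | succ j =>
      have hΔ : (fun m : ℕ => ((m : ℤ) + 1) * ((m + 1).descFactorial (j + 1) : ℤ) -
          m * (m.descFactorial (j + 1) : ℤ)) =
          ((j : ℤ) + 2) • (fun m => (m.descFactorial (j + 1) : ℤ)) +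
            ((j : ℤ) + 1) ^ 2 • (fun m => (m.descFactorial j : ℤ)) := by
        funext m
        exact descFactorial_forward_difference m j
      have h₁ := ih (j + 1)
      have h₂ := ih j
      rw [stirlingFunctional_succ, hΔ, map_add, map_smul, map_smul, smul_eq_mul, smul_eq_mul,
        stirlingSecond_succ_succ (n + 1) (j + 1)]
      rw [factorial_succ] at h₁ ⊢
      push_cast at h₁ ⊢
      linear_combination ((j : ℤ) + 2) * h₁ + ((j : ℤ) + 1) ^ 2 * h₂

theorem Bneg_eq_sum_factorial_sq_mul_stirlingSecond {n k N : ℕ} (hk : k < N) :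
    Bneg n k = ∑ j ∈ range N,
      (j ! : ℤ) ^ 2 * stirlingSecond (n + 1) (j + 1) * stirlingSecond (k + 1) (j + 1) := by
  have expand : (fun m : ℕ => ((m : ℤ) + 1) ^ k) =
      ∑ j ∈ range N, (stirlingSecond (k + 1) (j + 1) : ℤ) • fun m => (m.descFactorial j : ℤ) := by
    funext m
    rw [Finset.sum_apply]
    simp only [Pi.smul_apply, smul_eq_mul]
    rw [← sum_subset (range_subset_range.2 hk) fun j hjN hjk => by
      simp only [mem_range] at hjN hjk
      rw [stirlingSecond_eq_zero_of_lt (by omega), Nat.cast_zero, zero_mul]]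
    exact_mod_cast add_one_pow_eq_sum_stirlingSecond_mul_descFactorial m k
  rw [Bneg_eq_stirlingFunctional, expand, map_sum, mul_sum]
  refine sum_congr rfl fun j _ => ?_
  rw [map_smul, smul_eq_mul, mul_left_comm, stirlingFunctional_descFactorial]
  ring

/-- Duality of poly-Bernoulli numbers with negative upper index. -/
theorem polyBernoulli_duality (m k : ℕ) : Bneg m k = Bneg k m := by
  rw [Bneg_eq_sum_factorial_sq_mul_stirlingSecond (N := m + k + 1) (by omega),
    Bneg_eq_sum_factorial_sq_mul_stirlingSecond (N := m + k + 1) (by omega)]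
  exact sum_congr rfl fun j _ => mul_right_comm _ _ _
end

section
/- Let k1, k2, N be positive integers and p a prime. If n1, n2, m1 >= N with n1 ≡ m1 (mod p^{N-1}(p-1)), then B_{n1,n2}^{(-k1,-k2)} ≡ B_{m1,n2}^{(-k1,-k2)} (mod p^N). -/
/-- Double-indexed poly-Bernoulli number with negative upper indices
`B_{n1,n2}^{(-k1,-k2)}`, via the dual explicit formula
`B_{n1,n2}^{(-k1,-k2)} = B_{k1,k2}^{(-n1,-n2)}`. -/
def B2negD (n1 n2 k1 k2 : ℕ) : ℤ :=
  ∑ l1 ∈ Finset.range (k1 + k2 + 1), ∑ l2 ∈ Finset.range (k1 + k2 + 1),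
    (-1 : ℤ) ^ (l1 + l2 + k1 + k2) * (Nat.factorial l1 : ℤ) * (Nat.factorial l2 : ℤ) *
      ((l1 : ℤ) + 1) ^ n1 * ((l1 : ℤ) + (l2 : ℤ) + 2) ^ n2 *
      ∑ h ∈ Finset.range (k1 + k2 + 1),
        (S2 h l1 : ℤ) * (S2 (k1 + k2 - h) l2 : ℤ) *
          (if k1 ≤ h then (Nat.choose k2 (h - k1) : ℤ) else 0)

open Nat

theorem ZMod.pow_eq_pow_of_modEq_totient {n : ℕ} {x : ZMod n} (hx : IsUnit x) {a b : ℕ}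
    (h : a ≡ b [MOD φ n]) : x ^ a = x ^ b := by
  obtain ⟨u, rfl⟩ := hx
  rw [← Units.val_pow_eq_pow_val, ← Units.val_pow_eq_pow_val,
    pow_eq_pow_iff_modEq.mpr (h.of_dvd (orderOf_dvd_of_pow_eq_one (ZMod.pow_totient u)))]

theorem Int.pow_modEq_pow_of_modEq_totient {n : ℕ} {x : ℤ} (hx : IsCoprime x n) {a b : ℕ}
    (h : a ≡ b [MOD φ n]) : x ^ a ≡ x ^ b [ZMOD n] := by
  rw [← ZMod.intCast_eq_intCast_iff, Int.cast_pow, Int.cast_pow]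
  exact ZMod.pow_eq_pow_of_modEq_totient
    ((ZMod.coe_int_isUnit_iff_isCoprime x n).mpr hx.symm) h

theorem Int.pow_modEq_pow_of_modEq_totient_prime_pow {p N : ℕ} (hp : p.Prime) (x : ℤ)
    {a b : ℕ} (ha : N ≤ a) (hb : N ≤ b) (h : a ≡ b [MOD p ^ (N - 1) * (p - 1)]) :
    x ^ a ≡ x ^ b [ZMOD (p : ℤ) ^ N] := by
  rcases N.eq_zero_or_pos with rfl | hN
  · simp [Int.modEq_one]
  by_cases hpx : (p : ℤ) ∣ x
  · have pow_modEq_zero {c : ℕ} (hc : N ≤ c) : x ^ c ≡ 0 [ZMOD (p : ℤ) ^ N] :=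
      Int.modEq_zero_iff_dvd.mpr ((pow_dvd_pow_of_dvd hpx N).trans (pow_dvd_pow x hc))
    exact (pow_modEq_zero ha).trans (pow_modEq_zero hb).symm
  · have hcop : IsCoprime x ((p ^ N : ℕ) : ℤ) := by
      push_cast
      exact (((Nat.prime_iff_prime_int.mp hp).coprime_iff_not_dvd).mpr hpx).symm.pow_right
    rw [← Nat.totient_prime_pow hp hN] at h
    exact_mod_cast Int.pow_modEq_pow_of_modEq_totient hcop h

theorem doublePolyBernoulli_periodicity_fst_general (k1 k2 N : ℕ)
    (p : ℕ) (hp : p.Prime)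
    (n1 n2 m1 : ℕ) (hn1 : N ≤ n1) (hm1 : N ≤ m1)
    (h : n1 ≡ m1 [MOD p ^ (N - 1) * (p - 1)]) :
    B2negD n1 n2 k1 k2 ≡ B2negD m1 n2 k1 k2 [ZMOD (p : ℤ) ^ N] := by
  refine Int.ModEq.sum fun l1 _ => Int.ModEq.sum fun l2 _ => ?_
  gcongr
  exact Int.pow_modEq_pow_of_modEq_totient_prime_pow hp _ hn1 hm1 h

/-- Periodicity of double-indexed poly-Bernoulli numbers in the first index. -/
theorem doublePolyBernoulli_periodicity_fst (k1 k2 N : ℕ)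
    (hk1 : 0 < k1) (hk2 : 0 < k2) (hN : 0 < N) (p : ℕ) (hp : p.Prime)
    (n1 n2 m1 : ℕ) (hn1 : N ≤ n1) (hn2 : N ≤ n2) (hm1 : N ≤ m1)
    (h : n1 ≡ m1 [MOD p ^ (N - 1) * (p - 1)]) :
    B2negD n1 n2 k1 k2 ≡ B2negD m1 n2 k1 k2 [ZMOD (p : ℤ) ^ N] :=
  doublePolyBernoulli_periodicity_fst_general k1 k2 N p hp n1 n2 m1 hn1 hm1 h
end
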